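/- (Same signature lemma) Let f^[α], g^[β] ∈ I^[Σ] with st(α) = st(β) (equal signature terms), and assume every u^[μ] ∈ I^[Σ] with s(μ) ≺ s(α) s-reduces to zero by G^[Σ]. If both f^[α] and g^[β] are regular s-reduced (admit no regular s-reduction by G^[Σ]), then f = g. If both are only regular top s-reduced, then lt(f) = lt(g). -/

import Mathlib

open Finsupp

/-- The free algebra `K⟨X⟩`, realized as the monoid algebra of the free monoid. -/
abbrev FreeAlg (K X : Type*) [Field K] := MonoidAlgebra K (FreeMonoid X)

/-- Module monomials `a εᵢ b` of the free bimodule of rank `r`. -/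
structure MonMod (X : Type*) (r : ℕ) where
  left : FreeMonoid X
  idx : Fin r
  right : FreeMonoid X

/-- The free bimodule `Σ = (K⟨X⟩ ⊗ K⟨X⟩)^r`, realized as the span of module monomials. -/
abbrev FreeBimod (K X : Type*) [Field K] (r : ℕ) := MonMod X r →₀ K

/-- Two-sided action of a pair of words on a module monomial: `a·(c εᵢ d)·b = (ac) εᵢ (db)`. -/
def act {X : Type*} {r : ℕ} (a b : FreeMonoid X) (μ : MonMod X r) : MonMod X r :=
  ⟨a * μ.left, μ.idx, μ.right * b⟩

/-- The monomial `w` as an element of the free algebra. -/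
noncomputable def mon (K : Type*) [Field K] {X : Type*} (w : FreeMonoid X) : FreeAlg K X :=
  MonoidAlgebra.of K (FreeMonoid X) w

/-- The evaluation homomorphism `Σ → K⟨X⟩`, `εᵢ ↦ fᵢ`. -/
noncomputable def evalS {K X : Type*} [Field K] {r : ℕ} (F : Fin r → FreeAlg K X)
    (α : FreeBimod K X r) : FreeAlg K X :=
  α.sum fun μ c => c • (mon K μ.left * F μ.idx * mon K μ.right)

section Orders

variable {K X : Type*} [Field K] [LinearOrder (FreeMonoid X)] {r : ℕ}
  [LinearOrder (MonMod X r)]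

/-- The signature of a module element: the largest module monomial of its support
(`⊥` for the zero element). -/
noncomputable def sigW (α : FreeBimod K X r) : WithBot (MonMod X r) := α.support.max

/-- The leading monomial of a nonzero polynomial (junk value `1` for `0`). -/
noncomputable def lmon (p : FreeAlg K X) : FreeMonoid X :=
  if h : p.coeff.support.Nonempty then p.coeff.support.max' h else 1

/-- The leading coefficient. -/
noncomputable def lcoeff (p : FreeAlg K X) : K := p.coeff (lmon p)

/-- The leading term. -/
noncomputable def lterm (p : FreeAlg K X) : FreeAlg K X :=
  MonoidAlgebra.single (lmon p) (lcoeff p)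

/-- `f^[α]` is top s-reducible by the set `G^[Σ]`. -/
def TopSRed (G : Set (FreeAlg K X × FreeBimod K X r)) (f : FreeAlg K X)
    (α : FreeBimod K X r) : Prop :=
  ∃ g γ, (g, γ) ∈ G ∧ g ≠ 0 ∧ ∃ a b : FreeMonoid X,
    a * lmon g * b = lmon f ∧ WithBot.map (act a b) (sigW γ) ≤ sigW α

/-- `f^[α]` is singular top s-reducible by `G^[Σ]`. -/
def SingTopSRed (G : Set (FreeAlg K X × FreeBimod K X r)) (f : FreeAlg K X)
    (α : FreeBimod K X r) : Prop :=
  f ≠ 0 ∧ ∃ g γ, (g, γ) ∈ G ∧ g ≠ 0 ∧ ∃ a b : FreeMonoid X,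
    a * lmon g * b = lmon f ∧ WithBot.map (act a b) (sigW γ) = sigW α

/-- `f^[α]` admits a regular s-reduction by `G^[Σ]`. -/
def RegSRedible (G : Set (FreeAlg K X × FreeBimod K X r)) (f : FreeAlg K X)
    (α : FreeBimod K X r) : Prop :=
  ∃ g γ, (g, γ) ∈ G ∧ g ≠ 0 ∧ ∃ a b : FreeMonoid X,
    a * lmon g * b ∈ f.coeff.support ∧ WithBot.map (act a b) (sigW γ) < sigW α

/-- `f^[α]` admits a regular *top* s-reduction by `G^[Σ]`. -/
def RegTopSRedible (G : Set (FreeAlg K X × FreeBimod K X r)) (f : FreeAlg K X)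
    (α : FreeBimod K X r) : Prop :=
  f ≠ 0 ∧ ∃ g γ, (g, γ) ∈ G ∧ g ≠ 0 ∧ ∃ a b : FreeMonoid X,
    a * lmon g * b = lmon f ∧ WithBot.map (act a b) (sigW γ) < sigW α

/-- Result of one s-reduction step of `f^[α]` by `a g^[γ] b`. -/
noncomputable def sredResult (f : FreeAlg K X) (α : FreeBimod K X r)
    (g : FreeAlg K X) (γ : FreeBimod K X r) (a b : FreeMonoid X) :
    FreeAlg K X × FreeBimod K X r :=
  (f - (f.coeff (a * lmon g * b) * (lcoeff g)⁻¹) • (mon K a * g * mon K b),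
   α - (f.coeff (a * lmon g * b) * (lcoeff g)⁻¹) • Finsupp.mapDomain (act a b) γ)

/-- One s-reduction step by `G^[Σ]`. -/
def SRedStep (G : Set (FreeAlg K X × FreeBimod K X r))
    (p q : FreeAlg K X × FreeBimod K X r) : Prop :=
  ∃ g γ, (g, γ) ∈ G ∧ g ≠ 0 ∧ ∃ a b : FreeMonoid X,
    a * lmon g * b ∈ p.1.coeff.support ∧ WithBot.map (act a b) (sigW γ) ≤ sigW p.2 ∧
    q = sredResult p.1 p.2 g γ a b

/-- One *regular* s-reduction step by `G^[Σ]`. -/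
def RegSRedStep (G : Set (FreeAlg K X × FreeBimod K X r))
    (p q : FreeAlg K X × FreeBimod K X r) : Prop :=
  ∃ g γ, (g, γ) ∈ G ∧ g ≠ 0 ∧ ∃ a b : FreeMonoid X,
    a * lmon g * b ∈ p.1.coeff.support ∧ WithBot.map (act a b) (sigW γ) < sigW p.2 ∧
    q = sredResult p.1 p.2 g γ a b

/-- `p` s-reduces to zero by `G^[Σ]`. -/
def SRedToZero (G : Set (FreeAlg K X × FreeBimod K X r))
    (p : FreeAlg K X × FreeBimod K X r) : Prop :=
  ∃ σ : FreeBimod K X r, Relation.ReflTransGen (SRedStep G) p (0, σ)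

/-- `p` regular s-reduces to zero by `G^[Σ]`. -/
def RegSRedToZero (G : Set (FreeAlg K X × FreeBimod K X r))
    (p : FreeAlg K X × FreeBimod K X r) : Prop :=
  ∃ σ : FreeBimod K X r, Relation.ReflTransGen (RegSRedStep G) p (0, σ)

/-- `G^[Σ] ⊆ I^[Σ]`: labelled polynomials with nonzero polynomial part. -/
def InLab (F : Fin r → FreeAlg K X) (G : Set (FreeAlg K X × FreeBimod K X r)) : Prop :=
  ∀ p ∈ G, p.1 = evalS F p.2 ∧ p.1 ≠ 0

/-- `G^[Σ]` is a labelled Gröbner basis of `I^[Σ]`. -/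
def LabGB (F : Fin r → FreeAlg K X) (G : Set (FreeAlg K X × FreeBimod K X r)) : Prop :=
  InLab F G ∧ ∀ (f : FreeAlg K X) (α : FreeBimod K X r), f = evalS F α → SRedToZero G (f, α)

/-- `G^[Σ]` is a labelled Gröbner basis of `I^[Σ]` up to signature `σ`. -/
def LabGBUpTo (F : Fin r → FreeAlg K X) (G : Set (FreeAlg K X × FreeBimod K X r))
    (σ : MonMod X r) : Prop :=
  InLab F G ∧ ∀ (f : FreeAlg K X) (α : FreeBimod K X r), f = evalS F α →
    sigW α < (σ : WithBot (MonMod X r)) → SRedToZero G (f, α)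

/-- `G^[Σ]` is a *minimal* labelled Gröbner basis of `I^[Σ]`. -/
def MinLabGB (F : Fin r → FreeAlg K X) (G : Set (FreeAlg K X × FreeBimod K X r)) : Prop :=
  LabGB F G ∧ ∀ p ∈ G, ¬ TopSRed (G \ {p}) p.1 p.2

end Orders

/-!
Since the signature terms of `α` and `β` agree, `α - β` has signature strictly below `s(α)`, so
`f - g = evalS F (α - β)` s-reduces to zero by hypothesis. If `f ≠ g`, the first step of that
reduction rewrites a monomial of `f - g`, which lies in the support of `f` or of `g`, at a
signature below `s(α) = s(β)`: a regular s-reduction of `f` or of `g`.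

For leading terms: a chain of s-reductions to zero of a nonzero polynomial must at some step
top-reduce its leading monomial, because every earlier step keeps the leading monomial and does
not raise the signature. If `lt(f) ≠ lt(g)`, the leading monomial of `f - g` is that of `f` or
that of `g`, and the top reduction of `f - g` is a regular top reduction of `f` or of `g`.
-/

theorem evalS_sub {K X : Type*} [Field K] {r : ℕ} (F : Fin r → FreeAlg K X)
    (α β : FreeBimod K X r) : evalS F (α - β) = evalS F α - evalS F β :=
  Finsupp.sum_sub_index fun _ c d => sub_smul c d _

section LeadingMonomial

variable {K X : Type*} [Field K] [LinearOrder (FreeMonoid X)]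

theorem lmon_mem_support {p : FreeAlg K X} (hp : p ≠ 0) : lmon p ∈ p.coeff.support := by
  have h : p.coeff.support.Nonempty :=
    Finsupp.support_nonempty_iff.mpr (mt MonoidAlgebra.coeff_eq_zero.mp hp)
  rw [lmon, dif_pos h]
  exact Finset.max'_mem _ _

theorem le_lmon {p : FreeAlg K X} {w : FreeMonoid X} (hw : w ∈ p.coeff.support) :
    w ≤ lmon p := by
  rw [lmon, dif_pos ⟨w, hw⟩]
  exact Finset.le_max' _ _ hw

theorem lmon_eq_of_mem_of_forall_le {p : FreeAlg K X} {m : FreeMonoid X}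
    (hm : m ∈ p.coeff.support) (hle : ∀ w ∈ p.coeff.support, w ≤ m) : lmon p = m := by
  rw [lmon, dif_pos ⟨m, hm⟩]
  exact le_antisymm (Finset.max'_le _ _ _ hle) (Finset.le_max' _ _ hm)

theorem lcoeff_ne_zero {p : FreeAlg K X} (hp : p ≠ 0) : lcoeff p ≠ 0 :=
  Finsupp.mem_support_iff.mp (lmon_mem_support hp)

theorem lmon_neg (p : FreeAlg K X) : lmon (-p) = lmon p := by
  have h : (-p).coeff.support = p.coeff.support := Finsupp.support_neg p.coeff
  simp only [lmon, h]

theorem sub_ne_zero_and_lmon_sub_eq {f g : FreeAlg K X} {m : FreeMonoid X}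
    (hf : ∀ w ∈ f.coeff.support, w ≤ m) (hg : ∀ w ∈ g.coeff.support, w ≤ m)
    (hm : f.coeff m ≠ g.coeff m) : f - g ≠ 0 ∧ lmon (f - g) = m := by
  classical
  have hmem : m ∈ (f - g).coeff.support := by
    rw [Finsupp.mem_support_iff, MonoidAlgebra.coeff_sub, Finsupp.sub_apply]
    exact sub_ne_zero.mpr hm
  refine ⟨fun h => by simp [h] at hmem, lmon_eq_of_mem_of_forall_le hmem fun w hw => ?_⟩
  rcases Finset.mem_union.mp (Finsupp.support_sub (f := f.coeff) (g := g.coeff) hw) with hw | hw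
  exacts [hf w hw, hg w hw]

theorem lmon_sub_eq_left {f g : FreeAlg K X} (hf : f ≠ 0)
    (hg : ∀ w ∈ g.coeff.support, w ≤ lmon f) (hfg : lterm f ≠ lterm g) :
    lmon (f - g) = lmon f := by
  refine (sub_ne_zero_and_lmon_sub_eq (fun _ => le_lmon) hg fun hc => hfg ?_).2
  have hmem : lmon f ∈ g.coeff.support := by
    rw [Finsupp.mem_support_iff, ← hc]
    exact lcoeff_ne_zero hf
  have hg0 : g ≠ 0 := fun h => by simp [h] at hmem
  have heq : lmon g = lmon f := le_antisymm (hg _ (lmon_mem_support hg0)) (le_lmon hmem)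
  rw [lterm, lterm, lcoeff, lcoeff, heq, hc]

theorem lmon_sub_eq_or {f g : FreeAlg K X} (hfg : lterm f ≠ lterm g) :
    (f ≠ 0 ∧ lmon (f - g) = lmon f) ∨ (g ≠ 0 ∧ lmon (f - g) = lmon g) := by
  rcases eq_or_ne f 0 with rfl | hf
  · exact .inr ⟨fun hg => hfg (by rw [hg]), by rw [zero_sub, lmon_neg]⟩
  rcases eq_or_ne g 0 with rfl | hg
  · exact .inl ⟨hf, by rw [sub_zero]⟩
  rcases le_total (lmon g) (lmon f) with hle | hle
  · exact .inl ⟨hf, lmon_sub_eq_left hf (fun w hw => (le_lmon hw).trans hle) hfg⟩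
  · refine .inr ⟨hg, ?_⟩
    rw [← neg_sub, lmon_neg]
    exact lmon_sub_eq_left hg (fun w hw => (le_lmon hw).trans hle) hfg.symm

theorem le_of_mem_support_mon_mul_mul_mon {a b w : FreeMonoid X}
    (hmono : Monotone fun u => a * u * b) {g : FreeAlg K X}
    (hw : w ∈ (mon K a * g * mon K b).coeff.support) : w ≤ a * lmon g * b := by
  classical
  simp only [mon, MonoidAlgebra.of_apply] at hw
  obtain ⟨v, hv, rfl⟩ :=
    Finset.mem_image.mp (MonoidAlgebra.support_coeff_mul_single_subset _ _ _ hw)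
  obtain ⟨u, hu, rfl⟩ :=
    Finset.mem_image.mp (MonoidAlgebra.support_coeff_single_mul_subset _ _ _ hv)
  exact hmono (le_lmon hu)

theorem sredResult_fst_ne_zero_and_lmon_eq {a b : FreeMonoid X}
    (hmono : Monotone fun u => a * u * b)
    {r : ℕ} {f g : FreeAlg K X} (α γ : FreeBimod K X r) (hf : f ≠ 0)
    (hlt : a * lmon g * b < lmon f) :
    (sredResult f α g γ a b).1 ≠ 0 ∧ lmon (sredResult f α g γ a b).1 = lmon f := by
  have hsupp : ∀ w ∈ ((f.coeff (a * lmon g * b) * (lcoeff g)⁻¹) •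
      (mon K a * g * mon K b)).coeff.support, w < lmon f := fun w hw =>
    (le_of_mem_support_mon_mul_mul_mon hmono (Finsupp.support_smul hw)).trans_lt hlt
  refine sub_ne_zero_and_lmon_sub_eq (fun _ => le_lmon) (fun w hw => (hsupp w hw).le) ?_
  rw [Finsupp.notMem_support_iff.mp fun h => (hsupp _ h).false]
  exact lcoeff_ne_zero hf

end LeadingMonomial

section Signature

variable {K X : Type*} [Field K] {r : ℕ} [LinearOrder (MonMod X r)]

theorem sigW_eq_bot_iff {α : FreeBimod K X r} : sigW α = ⊥ ↔ α = 0 := by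
  rw [sigW, Finset.max_eq_bot, Finsupp.support_eq_empty]

theorem sigW_sub_le (α β : FreeBimod K X r) : sigW (α - β) ≤ sigW α ⊔ sigW β := by
  classical
  exact (Finset.max_mono Finsupp.support_sub).trans_eq Finset.max_union

theorem sigW_sub_lt_of_sigW_eq {α β : FreeBimod K X r} (hsig : sigW α = sigW β)
    (hsc : ∀ s : MonMod X r, sigW α = s → α s = β s) (hne : α ≠ β) :
    sigW (α - β) < sigW α := by
  obtain ⟨s, hs⟩ : ∃ s : MonMod X r, (s : WithBot (MonMod X r)) = sigW α := by
    refine WithBot.ne_bot_iff_exists.mp fun hbot => hne ?_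
    rw [sigW_eq_bot_iff.mp hbot, sigW_eq_bot_iff.mp (hsig.symm.trans hbot)]
  have hle : sigW (α - β) ≤ s := (sigW_sub_le α β).trans (by rw [← hsig, ← hs, sup_idem])
  rw [← hs]
  refine hle.lt_of_ne fun heq => ?_
  have hmem : s ∈ (α - β).support := Finset.mem_of_max heq
  rw [Finsupp.mem_support_iff, Finsupp.sub_apply, hsc s hs.symm, sub_self] at hmem
  exact hmem rfl

theorem sigW_mapDomain_act_le {a b : FreeMonoid X} (hmono : Monotone (act (r := r) a b))
    (γ : FreeBimod K X r) :
    sigW (mapDomain (act a b) γ) ≤ WithBot.map (act a b) (sigW γ) := by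
  classical
  refine Finset.max_le fun t ht => ?_
  obtain ⟨u, hu, rfl⟩ := Finset.mem_image.mp (Finsupp.mapDomain_support ht)
  obtain ⟨s, hs⟩ := Finset.max_of_mem hu
  rw [sigW, hs, WithBot.map_coe, WithBot.coe_le_coe]
  exact hmono (Finset.le_max_of_eq hu hs)

end Signature

section Reduction

variable {K X : Type*} [Field K] [LinearOrder (FreeMonoid X)] {r : ℕ} [LinearOrder (MonMod X r)]
  {G : Set (FreeAlg K X × FreeBimod K X r)}

theorem sigW_sredResult_snd_le {a b : FreeMonoid X} (hmono : Monotone (act (r := r) a b))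
    (f g : FreeAlg K X) {α γ : FreeBimod K X r}
    (hle : WithBot.map (act a b) (sigW γ) ≤ sigW α) :
    sigW (sredResult f α g γ a b).2 ≤ sigW α :=
  (sigW_sub_le _ _).trans <| sup_le le_rfl <|
    (Finset.max_mono Finsupp.support_smul).trans ((sigW_mapDomain_act_le hmono γ).trans hle)

theorem TopSRed.of_lmon_eq_of_sigW_le {f f' : FreeAlg K X} {α α' : FreeBimod K X r}
    (h : TopSRed G f α) (hf : lmon f = lmon f') (hα : sigW α ≤ sigW α') :
    TopSRed G f' α' := by
  obtain ⟨g, γ, hg, hg0, a, b, hab, hle⟩ := h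
  exact ⟨g, γ, hg, hg0, a, b, hab.trans hf, hle.trans hα⟩

theorem SRedToZero.topSRed
    (hmon : ∀ a b u v : FreeMonoid X, u ≤ v → a * u * b ≤ a * v * b)
    (hmod : ∀ (a b : FreeMonoid X) (μ ν : MonMod X r), μ ≤ ν → act a b μ ≤ act a b ν)
    {p : FreeAlg K X × FreeBimod K X r} (h : SRedToZero G p) (hp : p.1 ≠ 0) :
    TopSRed G p.1 p.2 := by
  obtain ⟨σ, h⟩ := h
  induction h using Relation.ReflTransGen.head_induction_on with
  | refl => exact absurd rfl hp
  | head hstep _ ih =>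
    obtain ⟨g, γ, hg, hg0, a, b, hmem, hle, rfl⟩ := hstep
    rcases (le_lmon hmem).lt_or_eq with hlt | htop
    · obtain ⟨hne, hlm⟩ :=
        sredResult_fst_ne_zero_and_lmon_eq (fun _ _ => hmon a b _ _) _ γ hp hlt
      exact (ih hne).of_lmon_eq_of_sigW_le hlm
        (sigW_sredResult_snd_le (fun _ _ => hmod a b _ _) _ g hle)
    · exact ⟨g, γ, hg, hg0, a, b, htop, hle⟩

theorem SRedToZero.exists_sRedStep {p : FreeAlg K X × FreeBimod K X r} (h : SRedToZero G p)
    (hp : p.1 ≠ 0) : ∃ q, SRedStep G p q := by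
  obtain ⟨σ, h⟩ := h
  rcases h.cases_head with heq | ⟨q, hq, -⟩
  · exact absurd (congrArg Prod.fst heq) hp
  · exact ⟨q, hq⟩

theorem regSRedible_or_of_sRedStep {f g : FreeAlg K X} {α β γ : FreeBimod K X r}
    {q : FreeAlg K X × FreeBimod K X r} (hstep : SRedStep G (f - g, γ) q)
    (hα : sigW γ < sigW α) (hβ : sigW γ < sigW β) :
    RegSRedible G f α ∨ RegSRedible G g β := by
  classical
  obtain ⟨g', γ', hg', hg0, a, b, hmem, hle, -⟩ := hstep
  rcases Finset.mem_union.mp (Finsupp.support_sub (f := f.coeff) (g := g.coeff) hmem) with h | h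
  · exact .inl ⟨g', γ', hg', hg0, a, b, h, hle.trans_lt hα⟩
  · exact .inr ⟨g', γ', hg', hg0, a, b, h, hle.trans_lt hβ⟩

theorem regTopSRedible_or_of_topSRed {f g : FreeAlg K X} {α β γ : FreeBimod K X r}
    (hfg : lterm f ≠ lterm g) (htop : TopSRed G (f - g) γ)
    (hα : sigW γ < sigW α) (hβ : sigW γ < sigW β) :
    RegTopSRedible G f α ∨ RegTopSRedible G g β := by
  obtain ⟨g', γ', hg', hg0, a, b, hab, hle⟩ := htop
  rcases lmon_sub_eq_or hfg with ⟨hf, hlm⟩ | ⟨hg, hlm⟩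
  · exact .inl ⟨hf, g', γ', hg', hg0, a, b, hab.trans hlm, hle.trans_lt hα⟩
  · exact .inr ⟨hg, g', γ', hg', hg0, a, b, hab.trans hlm, hle.trans_lt hβ⟩

end Reduction

theorem same_signature_lemma_general {K X : Type*} [Field K] {r : ℕ}
    [LinearOrder (FreeMonoid X)]
    [LinearOrder (MonMod X r)]
    (hmon : ∀ a b u v : FreeMonoid X, u ≤ v → a * u * b ≤ a * v * b)
    (hmod : ∀ (a b : FreeMonoid X) (μ ν : MonMod X r), μ ≤ ν → act a b μ ≤ act a b ν)
    (F : Fin r → FreeAlg K X) (G : Set (FreeAlg K X × FreeBimod K X r))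
    (f g : FreeAlg K X) (α β : FreeBimod K X r)
    (hf : f = evalS F α) (hg : g = evalS F β)
    (hsig : sigW α = sigW β)
    (hsc : ∀ s : MonMod X r, sigW α = (s : WithBot (MonMod X r)) → α s = β s)
    (hall : ∀ (u : FreeAlg K X) (μ : FreeBimod K X r),
      u = evalS F μ → sigW μ < sigW α → SRedToZero G (u, μ)) :
    ((¬ RegSRedible G f α) → (¬ RegSRedible G g β) → f = g) ∧
    ((¬ RegTopSRedible G f α) → (¬ RegTopSRedible G g β) → lterm f = lterm g) := by
  have hlt : f ≠ g → sigW (α - β) < sigW α := fun h =>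
    sigW_sub_lt_of_sigW_eq hsig hsc fun hαβ => h (by rw [hf, hg, hαβ])
  have hred : f ≠ g → SRedToZero G (f - g, α - β) := fun h =>
    hall _ _ (by rw [evalS_sub, hf, hg]) (hlt h)
  refine ⟨fun hnf hng => ?_, fun hnf hng => ?_⟩
  · by_contra h
    obtain ⟨q, hq⟩ := (hred h).exists_sRedStep (sub_ne_zero.mpr h)
    rcases regSRedible_or_of_sRedStep hq (hlt h) (hsig ▸ hlt h) with hr | hr
    exacts [hnf hr, hng hr]
  · by_contra h
    have hfg : f ≠ g := fun e => h (e ▸ rfl)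
    have htop := (hred hfg).topSRed hmon hmod (sub_ne_zero.mpr hfg)
    rcases regTopSRedible_or_of_topSRed h htop (hlt hfg) (hsig ▸ hlt hfg) with hr | hr
    exacts [hnf hr, hng hr]

/-- **Same signature lemma.** Let `f^[α], g^[β] ∈ I^[Σ]` have equal signature terms,
and assume every `u^[μ] ∈ I^[Σ]` with `s(μ) ≺ s(α)` s-reduces to zero by `G^[Σ]`.
If both are regular s-reduced, then `f = g`; if both are regular top s-reduced,
then `lt(f) = lt(g)`. -/
theorem same_signature_lemma {K X : Type*} [Field K] {r : ℕ}
    [LinearOrder (FreeMonoid X)] [WellFoundedLT (FreeMonoid X)]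
    [LinearOrder (MonMod X r)] [WellFoundedLT (MonMod X r)]
    (hmon : ∀ a b u v : FreeMonoid X, u ≤ v → a * u * b ≤ a * v * b)
    (hmod : ∀ (a b : FreeMonoid X) (μ ν : MonMod X r), μ ≤ ν → act a b μ ≤ act a b ν)
    (hcomp : ∀ (u v : FreeMonoid X) (i : Fin r),
      (u ≤ v ↔ (⟨u, i, 1⟩ : MonMod X r) ≤ ⟨v, i, 1⟩) ∧
      (u ≤ v ↔ (⟨1, i, u⟩ : MonMod X r) ≤ ⟨1, i, v⟩))
    (F : Fin r → FreeAlg K X) (G : Set (FreeAlg K X × FreeBimod K X r))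
    (hG : InLab F G)
    (f g : FreeAlg K X) (α β : FreeBimod K X r)
    (hf : f = evalS F α) (hg : g = evalS F β)
    (hsig : sigW α = sigW β)
    (hsc : ∀ s : MonMod X r, sigW α = (s : WithBot (MonMod X r)) → α s = β s)
    (hall : ∀ (u : FreeAlg K X) (μ : FreeBimod K X r),
      u = evalS F μ → sigW μ < sigW α → SRedToZero G (u, μ)) :
    ((¬ RegSRedible G f α) → (¬ RegSRedible G g β) → f = g) ∧
    ((¬ RegTopSRedible G f α) → (¬ RegTopSRedible G g β) → lterm f = lterm g) :=
  same_signature_lemma_general hmon hmod F G f g α β hf hg hsig hsc hall
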